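/- Let q, a, x, u, y ∈ ℂ with 0 < |q| < 1, |u| ≤ 1, |a y| < 1, x ≠ 0, and 1 - a q^j x ≠ 0 for all j ≥ 0, and let n ∈ ℕ. Then T(y D_q|u) applied to the function t ↦ 1/(a t;q)_n, evaluated at x, equals (1/(a x;q)_n) · ∑_{m=0}^{∞} u^{C(m,2)} (q^n;q)_m (a y)^m / ((q;q)_m (a q^n x;q)_m), and both series converge absolutely. -/

import Mathlib

/-- The finite q-shifted factorial (a;q)_n = ∏_{j=0}^{n-1} (1 - a q^j). -/
noncomputable def qPoch (q a : ℂ) (n : ℕ) : ℂ :=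
  ∏ j ∈ Finset.range n, (1 - a * q ^ j)

/-- The q-differential operator: (D_q f)(x) = (f(x) - f(qx))/x. -/
noncomputable def Dq (q : ℂ) (f : ℂ → ℂ) : ℂ → ℂ :=
  fun x => (f x - f (q * x)) / x

/-- The deformed q-exponential operator:
T(y D_q|u) f(x) = ∑_{m≥0} u^{C(m,2)} (y^m/(q;q)_m) (D_q^m f)(x). -/
noncomputable def Tq (q u y : ℂ) (f : ℂ → ℂ) (x : ℂ) : ℂ :=
  ∑' m : ℕ, u ^ (m.choose 2) * (y ^ m / qPoch q q m) * ((Dq q)^[m] f x)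

/-!
Applying `D_q` to `c / (at;q)_N` gives `c a (1 - q^N) / (at;q)_{N+1}`, since `(ax;q)_{N+1}` factors
both as `(ax;q)_N (1 - a x q^N)` and as `(1 - a x) (aqx;q)_N`. Iterating gives
`D_q^m [1/(at;q)_n](x) = a^m (q^n;q)_m / (ax;q)_{n+m}`, and splitting
`(ax;q)_{n+m} = (ax;q)_n (a q^n x;q)_m` turns the series defining `T` termwise into the claimed one.
For convergence, `(c;q)_m` tends to the infinite product, which is nonzero when no factor vanishes,
so every q-Pochhammer factor and its reciprocal stays bounded and the series is dominated by the
geometric series in `|a y|`.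
-/

open Filter Topology

lemma qPoch_succ (q a : ℂ) (n : ℕ) :
    qPoch q a (n + 1) = qPoch q a n * (1 - a * q ^ n) :=
  Finset.prod_range_succ _ _

lemma qPoch_add (q a : ℂ) (n m : ℕ) :
    qPoch q a (n + m) = qPoch q a n * qPoch q (a * q ^ n) m := by
  simp only [qPoch, Finset.prod_range_add, pow_add, mul_assoc]

lemma qPoch_succ' (q a : ℂ) (n : ℕ) :
    qPoch q a (n + 1) = (1 - a) * qPoch q (a * q) n := by
  rw [add_comm, qPoch_add, pow_one]
  simp [qPoch]

section QPochhammer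

variable {q : ℂ}

lemma qPoch_ne_zero {a : ℂ} (h : ∀ j, 1 - a * q ^ j ≠ 0) (n : ℕ) : qPoch q a n ≠ 0 :=
  Finset.prod_ne_zero_iff.2 fun j _ => h j

lemma one_sub_self_mul_pow_ne_zero (hq : ‖q‖ < 1) (j : ℕ) : 1 - q * q ^ j ≠ 0 := by
  rw [sub_ne_zero, ne_comm, ← pow_succ']
  intro h
  have := congrArg norm h
  rw [norm_pow, norm_one] at this
  exact (pow_lt_one₀ (norm_nonneg q) hq j.succ_ne_zero).ne this

lemma summable_norm_mul_pow (hq : ‖q‖ < 1) (c : ℂ) : Summable fun j : ℕ => ‖c * q ^ j‖ := by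
  simpa only [norm_mul, norm_pow] using
    (summable_geometric_of_lt_one (norm_nonneg q) hq).mul_left ‖c‖

lemma multipliable_one_sub_mul_pow (hq : ‖q‖ < 1) (c : ℂ) :
    Multipliable fun j : ℕ => 1 - c * q ^ j := by
  have hsum : Summable fun j : ℕ => ‖-(c * q ^ j)‖ := by
    simpa only [norm_neg] using summable_norm_mul_pow hq c
  simpa [sub_eq_add_neg] using multipliable_one_add_of_summable hsum

lemma tendsto_qPoch (hq : ‖q‖ < 1) (c : ℂ) :
    Tendsto (qPoch q c) atTop (𝓝 (∏' j : ℕ, (1 - c * q ^ j))) :=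
  (multipliable_one_sub_mul_pow hq c).hasProd.tendsto_prod_nat

lemma tprod_one_sub_mul_pow_ne_zero (hq : ‖q‖ < 1) {c : ℂ} (h : ∀ j, 1 - c * q ^ j ≠ 0) :
    ∏' j : ℕ, (1 - c * q ^ j) ≠ 0 := by
  have hsum : Summable fun j : ℕ => ‖-(c * q ^ j)‖ := by
    simpa only [norm_neg] using summable_norm_mul_pow hq c
  simpa [sub_eq_add_neg] using
    tprod_one_add_ne_zero_of_summable (fun j => by simpa [sub_eq_add_neg] using h j) hsum

end QPochhammer

section Dq

variable {q a : ℂ}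

lemma div_qPoch_sub_div_qPoch_div {x : ℂ} (hx : x ≠ 0) {N : ℕ}
    (hN : qPoch q (a * x) (N + 1) ≠ 0) (c : ℂ) :
    (c / qPoch q (a * x) N - c / qPoch q (a * (q * x)) N) / x
      = c * a * (1 - q ^ N) / qPoch q (a * x) (N + 1) := by
  have hright := qPoch_succ q (a * x) N
  have hleft : qPoch q (a * x) (N + 1) = (1 - a * x) * qPoch q (a * (q * x)) N := by
    rw [qPoch_succ', mul_right_comm, mul_assoc]
  have h₁ : qPoch q (a * x) N ≠ 0 := left_ne_zero_of_mul (hright ▸ hN)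
  have h₂ : qPoch q (a * (q * x)) N ≠ 0 := right_ne_zero_of_mul (hleft ▸ hN)
  rw [div_sub_div _ _ h₁ h₂, div_div, div_eq_div_iff (by simp [*]) hN]
  linear_combination c * qPoch q (a * (q * x)) N * hright - c * qPoch q (a * x) N * hleft

theorem Dq_iterate_one_div_qPoch (hq : q ≠ 0) (n m : ℕ) {x : ℂ} (hx : x ≠ 0)
    (h : ∀ j : ℕ, 1 - a * q ^ j * x ≠ 0) :
    (Dq q)^[m] (fun t => 1 / qPoch q (a * t) n) x
      = a ^ m * qPoch q (q ^ n) m / qPoch q (a * x) (n + m) := by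
  induction m generalizing x with
  | zero => simp [qPoch]
  | succ m ih =>
    have hqx : ∀ j : ℕ, 1 - a * q ^ j * (q * x) ≠ 0 := fun j => by
      simpa only [pow_succ, mul_assoc] using h (j + 1)
    have hN : qPoch q (a * x) (n + m + 1) ≠ 0 :=
      qPoch_ne_zero (fun j => by simpa only [mul_right_comm] using h j) _
    rw [Function.iterate_succ_apply', Dq, ih hx h, ih (mul_ne_zero hq hx) hqx,
      div_qPoch_sub_div_qPoch_div hx hN, qPoch_succ q (q ^ n), ← add_assoc, pow_add]
    ring

end Dq

section Summability

variable {q : ℂ}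

lemma isBigO_inv_qPoch (hq : ‖q‖ < 1) {b : ℂ} (hb : ∀ j, 1 - b * q ^ j ≠ 0) :
    (fun m => (qPoch q b m)⁻¹) =O[atTop] (fun _ => (1 : ℂ)) :=
  ((tendsto_qPoch hq b).inv₀ (tprod_one_sub_mul_pow_ne_zero hq hb)).isBigO_one ℂ

theorem summable_qSeries (hq : ‖q‖ < 1) {u z : ℂ} (hu : ‖u‖ ≤ 1) (hz : ‖z‖ < 1)
    {b : ℂ} (hb : ∀ j, 1 - b * q ^ j ≠ 0) (c : ℂ) :
    Summable fun m : ℕ =>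
      u ^ m.choose 2 * qPoch q c m * z ^ m / (qPoch q q m * qPoch q b m) := by
  have hu' : (fun m : ℕ => u ^ m.choose 2) =O[atTop] (fun _ => (1 : ℂ)) :=
    .of_bound 1 (.of_forall fun m => by simpa using pow_le_one₀ (norm_nonneg u) hu)
  have hbound := (((hu'.mul ((tendsto_qPoch hq c).isBigO_one ℂ)).mul
    (isBigO_inv_qPoch hq (one_sub_self_mul_pow_ne_zero hq))).mul (isBigO_inv_qPoch hq hb)).mul
    (Asymptotics.isBigO_refl (fun m : ℕ => z ^ m) atTop)
  refine summable_of_isBigO_nat (summable_geometric_of_lt_one (norm_nonneg z) hz) ?_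
  refine (hbound.congr_left fun m => ?_).trans_le fun m => ?_
  · simp only [div_eq_mul_inv, mul_inv]; ring
  · simp

end Summability

lemma Tq_term_one_div_qPoch {q a x : ℂ} (hq : q ≠ 0) (hx : x ≠ 0)
    (h : ∀ j : ℕ, 1 - a * q ^ j * x ≠ 0) (u y : ℂ) (n m : ℕ) :
    u ^ m.choose 2 * (y ^ m / qPoch q q m) * (Dq q)^[m] (fun t => 1 / qPoch q (a * t) n) x
      = 1 / qPoch q (a * x) n * (u ^ m.choose 2 * qPoch q (q ^ n) m * (a * y) ^ m /
          (qPoch q q m * qPoch q (a * q ^ n * x) m)) := by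
  rw [Dq_iterate_one_div_qPoch hq n m hx h, qPoch_add, mul_right_comm a x]
  simp only [div_eq_mul_inv, mul_inv, mul_pow]
  ring

theorem stmt8 (q a x u y : ℂ) (hq0 : 0 < ‖q‖) (hq1 : ‖q‖ < 1)
    (hu : ‖u‖ ≤ 1) (hay : ‖a * y‖ < 1) (hx : x ≠ 0)
    (h : ∀ j : ℕ, 1 - a * q ^ j * x ≠ 0) (n : ℕ) :
    (Summable fun m : ℕ =>
        u ^ (m.choose 2) * (y ^ m / qPoch q q m) *
          ((Dq q)^[m] (fun t => 1 / qPoch q (a * t) n) x)) ∧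
    (Summable fun m : ℕ =>
        u ^ (m.choose 2) * qPoch q (q ^ n) m * (a * y) ^ m /
          (qPoch q q m * qPoch q (a * q ^ n * x) m)) ∧
    Tq q u y (fun t => 1 / qPoch q (a * t) n) x =
      1 / qPoch q (a * x) n *
        ∑' m : ℕ,
          u ^ (m.choose 2) * qPoch q (q ^ n) m * (a * y) ^ m /
            (qPoch q q m * qPoch q (a * q ^ n * x) m) := by
  have hq : q ≠ 0 := norm_pos_iff.1 hq0
  have hterm := Tq_term_one_div_qPoch hq hx h u y n
  have hseries : Summable fun m : ℕ =>
      u ^ (m.choose 2) * qPoch q (q ^ n) m * (a * y) ^ m /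
        (qPoch q q m * qPoch q (a * q ^ n * x) m) := by
    refine summable_qSeries hq1 hu hay (fun j => ?_) _
    simpa only [mul_right_comm _ x, mul_assoc, ← pow_add] using h (n + j)
  refine ⟨(hseries.mul_left _).congr fun m => (hterm m).symm, hseries, ?_⟩
  rw [Tq, tsum_congr hterm, tsum_mul_left]
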